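/- arXiv:2410.01467 — 4 statements merged into one kernel-verified Lean document; each statement's English description precedes it below -/
import Mathlib

section
/- For all real α > 0, λ > 0 and every real s > 0 with s^α > λ, the integral ∫_0^∞ e^{−s t} (1 − E_α(−λ t^α)) dt converges and equals λ / (s (s^α + λ)). -/
open scoped Real
open MeasureTheory

/-- Summability of the Mittag-Leffler series for nonnegative argument. -/
lemma summable_ml_abs {α : ℝ} (hα : 0 < α) (y : ℝ) (hy : 0 ≤ y) :
    Summable (fun j : ℕ => y ^ j / Real.Gamma ((j : ℝ) * α + 1)) := by
  set x : ℝ := (2 * y + 2) ^ (α⁻¹) with hxdef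
  have hbase : (1 : ℝ) ≤ 2 * y + 2 := by linarith
  have hx1 : 1 ≤ x := Real.one_le_rpow hbase (by positivity)
  have hx0 : (0 : ℝ) < x := lt_of_lt_of_le one_pos hx1
  have hxα : x ^ α = 2 * y + 2 := by
    rw [hxdef, ← Real.rpow_mul (by linarith), inv_mul_cancel₀ hα.ne', Real.rpow_one]
  have key : ∀ k : ℕ, 1 ≤ (k : ℝ) * α →
      y ^ k / Real.Gamma ((k : ℝ) * α + 1) ≤ x * Real.exp x * (1 / 2) ^ k := by
    intro k hk
    have hGpos : 0 < Real.Gamma ((k : ℝ) * α + 1) := Real.Gamma_pos_of_pos (by linarith)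
    rw [div_le_iff₀ hGpos]
    set m : ℕ := ⌊(k : ℝ) * α⌋₊ with hmdef
    have hm1 : 1 ≤ m := Nat.le_floor (by exact_mod_cast hk)
    have hmle : (m : ℝ) ≤ (k : ℝ) * α := Nat.floor_le (by linarith)
    have hlt : (k : ℝ) * α < m + 1 := Nat.lt_floor_add_one _
    have hm1R : (1 : ℝ) ≤ m := by exact_mod_cast hm1
    have hlow : x ^ ((k : ℝ) * α - 1) ≤ Real.exp x * Real.Gamma ((k : ℝ) * α + 1) := by
      calc x ^ ((k : ℝ) * α - 1) ≤ x ^ ((m : ℕ) : ℝ) :=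
            Real.rpow_le_rpow_of_exponent_le hx1 (by linarith)
        _ = x ^ m := Real.rpow_natCast x m
        _ ≤ Real.exp x * (m.factorial : ℝ) := by
            have h := Real.pow_div_factorial_le_exp x hx0.le m
            have hfac : (0 : ℝ) < m.factorial := by exact_mod_cast m.factorial_pos
            rw [div_le_iff₀ hfac] at h
            linarith
        _ = Real.exp x * Real.Gamma ((m : ℝ) + 1) := by
            rw [Real.Gamma_nat_eq_factorial]
        _ ≤ Real.exp x * Real.Gamma ((k : ℝ) * α + 1) := by
            refine mul_le_mul_of_nonneg_left ?_ (Real.exp_pos x).le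
            exact Real.Gamma_strictMonoOn_Ici.monotoneOn
              (by simpa using by linarith : ((m : ℝ) + 1) ∈ Set.Ici (2:ℝ))
              (by simpa using by linarith : ((k : ℝ) * α + 1) ∈ Set.Ici (2:ℝ))
              (by linarith)
    have hxk : x ^ ((k : ℝ) * α) = (x ^ α) ^ k := by
      rw [mul_comm, Real.rpow_mul hx0.le, Real.rpow_natCast]
    have hxsplit : x ^ ((k : ℝ) * α) = x * x ^ ((k : ℝ) * α - 1) := by
      have : (k : ℝ) * α = 1 + ((k : ℝ) * α - 1) := by ring
      nth_rewrite 1 [this]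
      rw [Real.rpow_add hx0, Real.rpow_one]
    calc y ^ k ≤ (1 / 2) ^ k * x ^ ((k : ℝ) * α) := by
          rw [hxk, hxα, ← mul_pow]
          apply pow_le_pow_left₀ hy
          linarith
      _ = x * (1 / 2) ^ k * x ^ ((k : ℝ) * α - 1) := by rw [hxsplit]; ring
      _ ≤ x * (1 / 2) ^ k * (Real.exp x * Real.Gamma ((k : ℝ) * α + 1)) := by
          refine mul_le_mul_of_nonneg_left hlow (by positivity)
      _ = x * Real.exp x * (1 / 2) ^ k * Real.Gamma ((k : ℝ) * α + 1) := by ring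
  set j0 : ℕ := ⌈α⁻¹⌉₊ + 1 with hj0def
  rw [← summable_nat_add_iff j0]
  have hj0 : α⁻¹ ≤ (j0 : ℝ) := by
    calc α⁻¹ ≤ (⌈α⁻¹⌉₊ : ℝ) := Nat.le_ceil _
      _ ≤ (j0 : ℝ) := by rw [hj0def]; push_cast; linarith
  refine Summable.of_nonneg_of_le (fun j => ?_) (fun j => ?_)
    (((summable_geometric_of_lt_one (by norm_num) (by norm_num : (1:ℝ)/2 < 1))).mul_left
      (x * Real.exp x))
  · have : (0:ℝ) ≤ ((j + j0 : ℕ) : ℝ) * α + 1 := by positivity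
    exact div_nonneg (pow_nonneg hy _) (Real.Gamma_nonneg_of_nonneg this)
  · have hk : 1 ≤ ((j + j0 : ℕ) : ℝ) * α := by
      have h1 : (j0 : ℝ) ≤ ((j + j0 : ℕ) : ℝ) := by push_cast; linarith [Nat.cast_nonneg (α := ℝ) j]
      have h2 : α⁻¹ * α ≤ ((j + j0 : ℕ) : ℝ) * α :=
        mul_le_mul_of_nonneg_right (le_trans hj0 h1) hα.le
      rwa [inv_mul_cancel₀ hα.ne'] at h2
    calc y ^ (j + j0) / Real.Gamma (((j + j0 : ℕ) : ℝ) * α + 1)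
        ≤ x * Real.exp x * (1 / 2) ^ (j + j0) := key _ hk
      _ ≤ x * Real.exp x * (1 / 2) ^ j := by
          refine mul_le_mul_of_nonneg_left ?_ (by positivity)
          exact pow_le_pow_of_le_one (by norm_num) (by norm_num) (Nat.le_add_right _ _)

lemma summable_ml {α : ℝ} (hα : 0 < α) (z : ℝ) :
    Summable (fun j : ℕ => z ^ j / Real.Gamma ((j : ℝ) * α + 1)) := by
  refine Summable.of_norm ?_
  have h := summable_ml_abs hα |z| (abs_nonneg z)
  refine h.congr fun j => ?_
  have hG : (0:ℝ) ≤ Real.Gamma ((j : ℝ) * α + 1) :=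
    Real.Gamma_nonneg_of_nonneg (by positivity)
  rw [Real.norm_eq_abs, abs_div, abs_pow, abs_of_nonneg hG]

lemma integrable_tsum_of_summable_integral_norm' {X : Type*} [MeasurableSpace X] {μ : Measure X}
    {F : ℕ → X → ℝ} (hF : ∀ i, Integrable (F i) μ)
    (hsum : Summable fun i => ∫ a, ‖F i a‖ ∂μ) :
    Integrable (fun a => ∑' i, F i a) μ := by
  have h1 : ∀ i, AEMeasurable (fun a => (‖F i a‖₊ : ENNReal)) μ := fun i =>
    (hF i).aestronglyMeasurable.enorm
  have heq : ∀ i, ∫⁻ a, (‖F i a‖₊ : ENNReal) ∂μ = ENNReal.ofReal (∫ a, ‖F i a‖ ∂μ) := fun i =>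
    (ofReal_integral_norm_eq_lintegral_enorm (hF i)).symm
  have key : ∑' i, ∫⁻ a, (‖F i a‖₊ : ENNReal) ∂μ ≠ ⊤ := by
    rw [funext heq, ← ENNReal.ofReal_tsum_of_nonneg
      (fun i => integral_nonneg fun a => norm_nonneg _) hsum]
    exact ENNReal.ofReal_ne_top
  have hlt : ∫⁻ a, ∑' i, (‖F i a‖₊ : ENNReal) ∂μ ≠ ⊤ := by
    rw [lintegral_tsum h1]; exact key
  have hae : ∀ᵐ a ∂μ, Summable fun i => ‖F i a‖ := by
    filter_upwards [ae_lt_top' (AEMeasurable.ennreal_tsum h1) hlt] with a ha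
    have h2 : Summable fun i => (‖F i a‖₊ : ℝ) := by
      rw [← ENNReal.tsum_coe_ne_top_iff_summable_coe]
      exact ha.ne
    simpa [coe_nnnorm] using h2
  constructor
  · refine aestronglyMeasurable_of_tendsto_ae Filter.atTop
      (f := fun n a => ∑ i ∈ Finset.range n, F i a)
      (fun n => Finset.aestronglyMeasurable_fun_sum _ fun i _ => (hF i).aestronglyMeasurable) ?_
    filter_upwards [hae] with a ha
    exact ha.of_norm.hasSum.tendsto_sum_nat
  · rw [HasFiniteIntegral]
    refine lt_of_le_of_lt (lintegral_mono_ae ?_) hlt.lt_top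
    filter_upwards [hae] with a ha
    calc (‖∑' i, F i a‖₊ : ENNReal) = ENNReal.ofReal ‖∑' i, F i a‖ := by
          rw [ofReal_norm, enorm_eq_nnnorm]
      _ ≤ ENNReal.ofReal (∑' i, ‖F i a‖) :=
          ENNReal.ofReal_le_ofReal (norm_tsum_le_tsum_norm ha)
      _ = ∑' i, (‖F i a‖₊ : ENNReal) := by
          rw [ENNReal.ofReal_tsum_of_nonneg (fun i => norm_nonneg _) ha]
          exact tsum_congr fun i => ofReal_norm (F i a)

/-- The one-parameter Mittag-Leffler function (real version):
`E_α(x) = ∑_{j=0}^∞ x^j / Γ(jα + 1)`. -/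
noncomputable def mittagLeffler (α x : ℝ) : ℝ :=
  ∑' j : ℕ, x ^ j / Real.Gamma ((j : ℝ) * α + 1)

theorem laplace_transform_one_sub_mittagLeffler (α lam s : ℝ) (hα : 0 < α)
    (hlam : 0 < lam) (hs : 0 < s) (hsα : lam < s ^ α) :
    IntegrableOn
      (fun t : ℝ => Real.exp (-(s * t)) * (1 - mittagLeffler α (-(lam * t ^ α))))
      (Set.Ioi 0) ∧
    ∫ t in Set.Ioi (0 : ℝ), Real.exp (-(s * t)) * (1 - mittagLeffler α (-(lam * t ^ α)))
      = lam / (s * (s ^ α + lam)) := by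
  have hsα0 : (0:ℝ) < s ^ α := Real.rpow_pos_of_pos hs α
  set r : ℝ := lam / s ^ α with hrdef
  have hr0 : 0 < r := div_pos hlam hsα0
  have hr1 : r < 1 := (div_lt_one hsα0).mpr hsα
  set c : ℕ → ℝ := fun j => α * ((j:ℝ) + 1) + 1 with hcdef
  have hc0 : ∀ j, 0 < c j := fun j => by positivity
  set F : ℕ → ℝ → ℝ := fun j t =>
    -(Real.exp (-(s*t)) * ((-(lam * t ^ α)) ^ (j+1) / Real.Gamma (((j:ℝ)+1) * α + 1)))
    with hFdef
  -- pointwise identity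
  have hpt : ∀ t : ℝ, Real.exp (-(s*t)) * (1 - mittagLeffler α (-(lam * t ^ α)))
      = ∑' j, F j t := by
    intro t
    set z : ℝ := -(lam * t ^ α) with hzdef
    have hsm := summable_ml hα z
    have h0 : mittagLeffler α z
        = 1 + ∑' j : ℕ, z ^ (j+1) / Real.Gamma (((j:ℝ)+1) * α + 1) := by
      rw [mittagLeffler, Summable.tsum_eq_zero_add hsm]
      congr 1
      · norm_num [Real.Gamma_one]
      · exact tsum_congr fun j => by rw [Nat.cast_add, Nat.cast_one]
    rw [h0]
    have : Real.exp (-(s*t)) * (1 - (1 + ∑' j : ℕ, z ^ (j+1) / Real.Gamma (((j:ℝ)+1) * α + 1)))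
        = -(Real.exp (-(s*t)) * ∑' j : ℕ, z ^ (j+1) / Real.Gamma (((j:ℝ)+1) * α + 1)) := by
      ring
    rw [this, ← tsum_mul_left, ← tsum_neg]
  -- description of F on Ioi 0
  set C : ℕ → ℝ := fun j => -(-lam)^(j+1) / Real.Gamma (c j) with hCdef
  have hFeq : ∀ j : ℕ, ∀ t ∈ Set.Ioi (0:ℝ),
      F j t = C j * (t ^ (α*((j:ℝ)+1)) * Real.exp (-(s*t))) := by
    intro j t ht
    have ht0 : (0:ℝ) < t := ht
    have h1 : (-(lam * t ^ α)) ^ (j+1) = (-lam) ^ (j+1) * t ^ (α*((j:ℝ)+1)) := by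
      rw [show -(lam * t^α) = (-lam) * t^α by ring, mul_pow]
      congr 1
      rw [← Real.rpow_natCast (t ^ α) (j+1), ← Real.rpow_mul ht0.le]
      congr 1
      push_cast
      ring
    have h2 : ((j:ℝ)+1) * α + 1 = c j := by rw [hcdef]; ring
    simp only [hFdef, h1, h2, hCdef]
    ring
  -- base integrability and value
  have hq0 : ∀ j : ℕ, (0:ℝ) < α*((j:ℝ)+1) := fun j => by positivity
  have hbase_int : ∀ j : ℕ,
      IntegrableOn (fun t : ℝ => t ^ (α*((j:ℝ)+1)) * Real.exp (-(s*t))) (Set.Ioi 0) := by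
    intro j
    have h := integrableOn_rpow_mul_exp_neg_mul_rpow
      (s := α*((j:ℝ)+1)) (p := 1) (b := s) (by linarith [hq0 j]) one_pos hs
    refine h.congr_fun (fun t ht => ?_) measurableSet_Ioi
    dsimp only
    rw [Real.rpow_one]
    ring_nf
  have hbase_val : ∀ j : ℕ,
      ∫ t in Set.Ioi (0:ℝ), t ^ (α*((j:ℝ)+1)) * Real.exp (-(s*t))
        = (1/s) ^ (c j) * Real.Gamma (c j) := by
    intro j
    have h := Real.integral_rpow_mul_exp_neg_mul_Ioi (a := c j) (hc0 j) hs
    have h2 : ∀ t : ℝ, t ^ (α*((j:ℝ)+1)) = t ^ (c j - 1) := fun t => by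
      rw [hcdef]; norm_num
    simp_rw [h2]
    exact h
  have hGpos : ∀ j, 0 < Real.Gamma (c j) := fun j => Real.Gamma_pos_of_pos (hc0 j)
  -- integrability of each F j
  have hint : ∀ j : ℕ, Integrable (F j) (volume.restrict (Set.Ioi 0)) := by
    intro j
    exact IntegrableOn.congr_fun ((hbase_int j).const_mul (C j))
      (fun t ht => (hFeq j t ht).symm) measurableSet_Ioi
  -- the power identity
  have hpow : ∀ j : ℕ, (1/s) ^ (c j) = ((s ^ α)⁻¹) ^ (j+1) * s⁻¹ := by
    intro j
    rw [hcdef]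
    rw [Real.rpow_add (by positivity), Real.rpow_one, Real.rpow_mul (by positivity : (0:ℝ) ≤ 1/s)]
    rw [show ((j:ℝ)+1) = ((j+1 : ℕ) : ℝ) by push_cast; ring, Real.rpow_natCast]
    rw [one_div, Real.inv_rpow hs.le]
  -- value of ∫ ‖F j‖
  have hnormval : ∀ j : ℕ,
      ∫ t in Set.Ioi (0:ℝ), ‖F j t‖ = r ^ (j+1) / s := by
    intro j
    have habs : ∀ t ∈ Set.Ioi (0:ℝ),
        ‖F j t‖ = (lam^(j+1) / Real.Gamma (c j)) * (t ^ (α*((j:ℝ)+1)) * Real.exp (-(s*t))) := by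
      intro t ht
      have ht0 : (0:ℝ) < t := ht
      rw [hFeq j t ht, Real.norm_eq_abs, abs_mul, hCdef]
      have h1 : |(-(-lam)^(j+1) : ℝ) / Real.Gamma (c j)| = lam^(j+1) / Real.Gamma (c j) := by
        rw [abs_div, abs_neg, abs_pow, abs_neg, abs_of_pos hlam, abs_of_pos (hGpos j)]
      rw [h1, abs_of_nonneg (by positivity : (0:ℝ) ≤ t ^ (α*((j:ℝ)+1)) * Real.exp (-(s*t)))]
    rw [setIntegral_congr_fun measurableSet_Ioi habs, integral_const_mul, hbase_val j, hpow j,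
      hrdef, div_pow, inv_pow]
    have hG := (hGpos j).ne'
    have h2 : ((s^α)^(j+1):ℝ) ≠ 0 := by positivity
    field_simp
  -- value of ∫ F j
  have hival : ∀ j : ℕ,
      ∫ t in Set.Ioi (0:ℝ), F j t = (r/s) * (-r) ^ j := by
    intro j
    rw [setIntegral_congr_fun measurableSet_Ioi (hFeq j), integral_const_mul, hbase_val j,
      hpow j, hCdef]
    have hG := (hGpos j).ne'
    have h1 : (-lam)^(j+1) * ((s ^ α)⁻¹) ^ (j+1) = (-r) ^ (j+1) := by
      rw [← mul_pow, hrdef]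
      congr 1
      field_simp
    have : -(-lam)^(j+1) / Real.Gamma (c j) * ((s ^ α)⁻¹ ^ (j+1) * s⁻¹ * Real.Gamma (c j))
        = -((-lam)^(j+1) * ((s ^ α)⁻¹) ^ (j+1)) * s⁻¹ := by
      field_simp
    rw [this, h1, pow_succ]
    rw [div_eq_mul_inv]
    ring
  -- summability of norms
  have hsumnorm : Summable (fun j : ℕ => ∫ t in Set.Ioi (0:ℝ), ‖F j t‖) := by
    refine ((summable_geometric_of_lt_one hr0.le hr1).mul_left (r/s)).congr fun j => ?_
    rw [hnormval j, pow_succ]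
    field_simp
  have hIntTsum : Integrable (fun t => ∑' j, F j t) (volume.restrict (Set.Ioi 0)) :=
    integrable_tsum_of_summable_integral_norm' hint hsumnorm
  have hfun : (fun t : ℝ => Real.exp (-(s * t)) * (1 - mittagLeffler α (-(lam * t ^ α))))
      = fun t => ∑' j, F j t := funext hpt
  constructor
  · rw [hfun]; exact hIntTsum
  · rw [hfun, ← integral_tsum_of_summable_integral_norm hint hsumnorm]
    have hts : ∑' j : ℕ, (∫ t in Set.Ioi (0:ℝ), F j t) = (r/s) * ∑' j : ℕ, (-r) ^ j := by
      rw [← tsum_mul_left]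
      exact tsum_congr fun j => hival j
    rw [hts, tsum_geometric_of_norm_lt_one (by rw [norm_neg, Real.norm_eq_abs, abs_of_pos hr0]; exact hr1)]
    rw [hrdef]
    have h1 : s ^ α + lam ≠ 0 := by positivity
    field_simp
    ring_nf
    rw [← add_mul, mul_inv_cancel₀ h1]
end

section
/- Let 0 < α < 1 and q > 1. Then |ζ_{k,1}| = |ζ_{k,2}| for every integer k ≥ 0; moreover |ζ_{0,1}| = q₁, |ζ_{1,1}| = q₂, and |ζ_{k,1}| ≥ 1 + 2/q for every integer k ≥ 2. Consequently, for every real l with 1 < l < min{1 + 2/q, q₁, q₂} one has |ζ_{k,1}| = |ζ_{k,2}| > l for all integers k ≥ 0. -/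
open scoped Real

/-- The centers `c₀ = 1/2`, `c_k = (q+1) q^{k−1} / 2` for `k ≥ 1`. -/
noncomputable def cCtr (q : ℝ) : ℕ → ℝ
  | 0 => 1 / 2
  | k + 1 => (q + 1) * q ^ k / 2

/-- The radii `r₀ = 1/2`, `r_k = (q−1) q^{k−1} / 2` for `k ≥ 1`. -/
noncomputable def rRad (q : ℝ) : ℕ → ℝ
  | 0 => 1 / 2
  | k + 1 => (q - 1) * q ^ k / 2

/-- The pole `ζ_{k,1} = −c_k/r_k + (cos((1−α)π) + i sin((1−α)π))/r_k`. -/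
noncomputable def zetaOne (α q : ℝ) (k : ℕ) : ℂ :=
  -(cCtr q k / rRad q k : ℝ) +
    ((Real.cos ((1 - α) * π) : ℂ) + Complex.I * (Real.sin ((1 - α) * π) : ℂ)) / (rRad q k : ℝ)

/-- The pole `ζ_{k,2} = −c_k/r_k + (cos((1−α)π) − i sin((1−α)π))/r_k`. -/
noncomputable def zetaTwo (α q : ℝ) (k : ℕ) : ℂ :=
  -(cCtr q k / rRad q k : ℝ) +
    ((Real.cos ((1 - α) * π) : ℂ) - Complex.I * (Real.sin ((1 - α) * π) : ℂ)) / (rRad q k : ℝ)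

/-- `q₁ = √(5 − 4cos((1−α)π))`. -/
noncomputable def qOne (α : ℝ) : ℝ := Real.sqrt (5 - 4 * Real.cos ((1 - α) * π))

/-- `q₂ = (1/(q−1)) · √((q+1)² − 4(q+1)cos((1−α)π) + 4)`. -/
noncomputable def qTwo (α q : ℝ) : ℝ :=
  (1 / (q - 1)) * Real.sqrt ((q + 1) ^ 2 - 4 * (q + 1) * Real.cos ((1 - α) * π) + 4)

lemma sq_abs_zetaOne (α q : ℝ) (k : ℕ) (hr : rRad q k ≠ 0) :
    (‖zetaOne α q k‖)^2 =
      (cCtr q k ^ 2 - 2 * cCtr q k * Real.cos ((1-α)*π) + 1) / (rRad q k)^2 := by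
  rw [Complex.sq_norm, Complex.normSq_apply]
  simp only [zetaOne, Complex.add_re, Complex.add_im, Complex.neg_re, Complex.neg_im,
    Complex.ofReal_re, Complex.ofReal_im, Complex.div_ofReal_re, Complex.div_ofReal_im,
    Complex.mul_re, Complex.mul_im, Complex.I_re, Complex.I_im]
  set co := Real.cos ((1-α)*π) with hco
  set si := Real.sin ((1-α)*π) with hsi
  have hs : si^2 + co^2 = 1 := Real.sin_sq_add_cos_sq _
  field_simp
  linear_combination hs

lemma sq_abs_zetaTwo (α q : ℝ) (k : ℕ) (hr : rRad q k ≠ 0) :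
    (‖zetaTwo α q k‖)^2 =
      (cCtr q k ^ 2 - 2 * cCtr q k * Real.cos ((1-α)*π) + 1) / (rRad q k)^2 := by
  rw [Complex.sq_norm, Complex.normSq_apply]
  simp only [zetaTwo, Complex.add_re, Complex.add_im, Complex.sub_re, Complex.sub_im,
    Complex.neg_re, Complex.neg_im,
    Complex.ofReal_re, Complex.ofReal_im, Complex.div_ofReal_re, Complex.div_ofReal_im,
    Complex.mul_re, Complex.mul_im, Complex.I_re, Complex.I_im]
  set co := Real.cos ((1-α)*π) with hco
  set si := Real.sin ((1-α)*π) with hsi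
  have hs : si^2 + co^2 = 1 := Real.sin_sq_add_cos_sq _
  field_simp
  linear_combination hs

lemma rRad_pos {q : ℝ} (hq : 1 < q) : ∀ k, 0 < rRad q k
  | 0 => by norm_num [rRad]
  | (k+1) => by
      have h1 : (0:ℝ) < q - 1 := by linarith
      have h2 : (0:ℝ) < q ^ k := pow_pos (by linarith) k
      simp only [rRad]
      positivity

theorem abs_zeta_gt_l (α q : ℝ) (hα0 : 0 < α) (hα1 : α < 1) (hq : 1 < q) :
    (∀ k : ℕ, ‖zetaOne α q k‖ = ‖zetaTwo α q k‖) ∧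
    ‖zetaOne α q 0‖ = qOne α ∧
    ‖zetaOne α q 1‖ = qTwo α q ∧
    (∀ k : ℕ, 2 ≤ k → 1 + 2 / q ≤ ‖zetaOne α q k‖) ∧
    ∀ l : ℝ, 1 < l → l < min (1 + 2 / q) (min (qOne α) (qTwo α q)) →
      ∀ k : ℕ, l < ‖zetaOne α q k‖ ∧ l < ‖zetaTwo α q k‖ := by
  have hq0 : (0:ℝ) < q := by linarith
  have hr : ∀ k, 0 < rRad q k := rRad_pos hq
  have hco1 : Real.cos ((1-α)*π) ≤ 1 := Real.cos_le_one _
  set co := Real.cos ((1-α)*π) with hco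
  have h1 : ∀ k, ‖zetaOne α q k‖ = ‖zetaTwo α q k‖ := by
    intro k
    rw [← Real.sqrt_sq (norm_nonneg (zetaOne α q k)),
        ← Real.sqrt_sq (norm_nonneg (zetaTwo α q k)),
        sq_abs_zetaOne α q k (hr k).ne', sq_abs_zetaTwo α q k (hr k).ne']
  have h2 : ‖zetaOne α q 0‖ = qOne α := by
    rw [← Real.sqrt_sq (norm_nonneg (zetaOne α q 0)),
        sq_abs_zetaOne α q 0 (hr 0).ne']
    unfold qOne
    congr 1
    simp only [cCtr, rRad, ← hco]
    norm_num
    ring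
  have h3 : ‖zetaOne α q 1‖ = qTwo α q := by
    have hq1 : (0:ℝ) ≤ q - 1 := by linarith
    have hA : (0:ℝ) ≤ (q+1)^2 - 4*(q+1)*co + 4 := by nlinarith
    rw [← Real.sqrt_sq (norm_nonneg (zetaOne α q 1)),
        sq_abs_zetaOne α q 1 (hr 1).ne']
    have he : (cCtr q 1 ^ 2 - 2 * cCtr q 1 * co + 1) / (rRad q 1)^2
        = ((q+1)^2 - 4*(q+1)*co + 4) / (q-1)^2 := by
      have hcc : cCtr q 1 = (q+1)/2 := by simp [cCtr]
      have hrr : rRad q 1 = (q-1)/2 := by simp [rRad]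
      have hne : q - 1 ≠ 0 := by linarith
      rw [hcc, hrr]
      field_simp
      ring
    rw [← hco, he, Real.sqrt_div hA, Real.sqrt_sq hq1]
    unfold qTwo
    rw [← hco]
    ring
  have h4 : ∀ k : ℕ, 2 ≤ k → 1 + 2 / q ≤ ‖zetaOne α q k‖ := by
    intro k hk
    obtain ⟨n, rfl⟩ : ∃ n, k = n + 2 := ⟨k - 2, by omega⟩
    rw [← Real.sqrt_sq (norm_nonneg (zetaOne α q (n+2))),
        sq_abs_zetaOne α q (n+2) (hr _).ne']
    have hb : (0:ℝ) ≤ 1 + 2/q := by positivity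
    rw [← Real.sqrt_sq hb]
    apply Real.sqrt_le_sqrt
    have hcc : cCtr q (n+2) = (q+1) * q^(n+1) / 2 := rfl
    have hrr : rRad q (n+2) = (q-1) * q^(n+1) / 2 := rfl
    have hq1 : (0:ℝ) < q - 1 := by linarith
    rw [hcc, hrr, le_div_iff₀ (by positivity)]
    set Q := q^(n+1) with hQdef
    have hQ : q ≤ Q := by
      calc q = q^1 := (pow_one q).symm
        _ ≤ q^(n+1) := pow_le_pow_right₀ hq.le (by omega)
    have hd : (1+2/q)*((q-1)*Q/2) ≤ (q+1)*Q/2 - 1 := by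
      have hqq : 1 + 2/q = (q+2)/q := by field_simp
      rw [hqq, div_mul_eq_mul_div, div_le_iff₀ hq0]
      nlinarith
    have hc1 : (1:ℝ) ≤ (q+1)*Q/2 := by nlinarith
    have h5 : ((1+2/q)*((q-1)*Q/2))^2 ≤ ((q+1)*Q/2 - 1)^2 := by
      apply pow_le_pow_left₀ (by positivity) hd
    have h6 : (0:ℝ) ≤ ((q+1)*Q/2) * (1 - co) := by
      apply mul_nonneg (by positivity); linarith
    nlinarith [h5, h6]
  refine ⟨h1, h2, h3, h4, ?_⟩
  intro l hl1 hl2 k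
  obtain ⟨hla, hlb⟩ := lt_min_iff.mp hl2
  obtain ⟨hlc, hld⟩ := lt_min_iff.mp hlb
  have hone : l < ‖zetaOne α q k‖ := by
    match k with
    | 0 => rw [h2]; exact hlc
    | 1 => rw [h3]; exact hld
    | (n+2) => exact lt_of_lt_of_le hla (h4 (n+2) (by omega))
  exact ⟨hone, (h1 k) ▸ hone⟩
end

section
/- Let 0 < α < 1, q > 1 and let l be a real number with 1 < l < min{1 + 2/q, q₁, q₂}. Then for every integer k ≥ 0 and every complex number z with |z| ≤ l, one has (r_k z + c_k)² + 2(r_k z + c_k)cos(απ) + 1 ≠ 0. -/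
open scoped Real

lemma key_ineq (α q l : ℝ) (hq : 1 < q) (hl1 : 1 < l)
    (hl2 : l < min (1 + 2 / q) (min (qOne α) (qTwo α q))) :
    ∀ k : ℕ, (rRad q k * l) ^ 2 <
      (cCtr q k) ^ 2 - 2 * Real.cos ((1 - α) * π) * cCtr q k + 1 := by
  have hc1 : Real.cos ((1 - α) * π) ≤ 1 := Real.cos_le_one _
  set θ := Real.cos ((1 - α) * π) with hθ
  have hl0 : l < 1 + 2 / q := lt_of_lt_of_le hl2 (min_le_left _ _)
  have hlq1 : l < qOne α := lt_of_lt_of_le hl2 (le_trans (min_le_right _ _) (min_le_left _ _))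
  have hlq2 : l < qTwo α q := lt_of_lt_of_le hl2 (le_trans (min_le_right _ _) (min_le_right _ _))
  have hq0 : (0:ℝ) < q := by linarith
  intro k
  match k with
  | 0 =>
    have h5 : (0:ℝ) ≤ 5 - 4 * θ := by linarith
    have : l ^ 2 < 5 - 4 * θ := (Real.lt_sqrt (by linarith)).mp hlq1
    simp only [rRad, cCtr]
    nlinarith
  | 1 =>
    have hA : (q - 1) ^ 2 ≤ (q + 1) ^ 2 - 4 * (q + 1) * θ + 4 := by nlinarith
    have hA0 : (0:ℝ) ≤ (q + 1) ^ 2 - 4 * (q + 1) * θ + 4 := by nlinarith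
    have h1 : l * (q - 1) < Real.sqrt ((q + 1) ^ 2 - 4 * (q + 1) * θ + 4) := by
      have := (mul_lt_mul_iff_left₀ (show (0:ℝ) < q - 1 by linarith)).mpr hlq2
      rw [qTwo] at this
      calc l * (q - 1) < (1 / (q - 1)) * Real.sqrt ((q + 1) ^ 2 - 4 * (q + 1) * θ + 4) * (q - 1) := this
        _ = Real.sqrt ((q + 1) ^ 2 - 4 * (q + 1) * θ + 4) := by
          rw [mul_comm, ← mul_assoc, mul_one_div, div_self (by linarith : q - 1 ≠ 0), one_mul]
    have h2 : (l * (q - 1)) ^ 2 < (q + 1) ^ 2 - 4 * (q + 1) * θ + 4 :=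
      (Real.lt_sqrt (by nlinarith)).mp h1
    simp only [rRad, cCtr, pow_zero]
    nlinarith
  | (k + 2) =>
    set t := q ^ (k + 1) with htdef
    have ht : q ≤ t := le_self_pow₀ (by linarith) (Nat.succ_ne_zero k)
    have ht0 : (0:ℝ) < t := by positivity
    have hlq : l * q < q + 2 := by
      have := (mul_lt_mul_iff_left₀ hq0).mpr hl0
      calc l * q < (1 + 2 / q) * q := this
        _ = q + 2 := by field_simp
    have h2 : (q - 1) * l < q + 1 := by nlinarith
    have hrl : (q - 1) * t / 2 * l < (q + 1) * t / 2 - 1 := by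
      nlinarith [mul_nonneg (sub_nonneg.mpr ht) (by nlinarith : (0:ℝ) ≤ q + 1 - (q - 1) * l)]
    have hc : (1:ℝ) < (q + 1) * t / 2 := by nlinarith
    have hrl0 : (0:ℝ) ≤ (q - 1) * t / 2 * l := by
      have : (0:ℝ) ≤ (q - 1) * t := mul_nonneg (by linarith) ht0.le
      nlinarith
    simp only [rRad, cCtr]
    nlinarith [mul_pos (mul_pos (show (0:ℝ) < q + 1 by linarith) ht0) (show (0:ℝ) < (q+1)*t/2 - 1 by linarith)]

theorem quadratic_ne_zero_on_disc (α q l : ℝ) (hα0 : 0 < α) (hα1 : α < 1) (hq : 1 < q)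
    (hl1 : 1 < l) (hl2 : l < min (1 + 2 / q) (min (qOne α) (qTwo α q))) :
    ∀ k : ℕ, ∀ z : ℂ, ‖z‖ ≤ l →
      ((rRad q k : ℂ) * z + (cCtr q k : ℂ)) ^ 2 +
          2 * ((rRad q k : ℂ) * z + (cCtr q k : ℂ)) * (Real.cos (α * π) : ℂ) + 1 ≠ 0 := by
  intro k z hz h
  have hkey := key_ineq α q l hq hl1 hl2 k
  have hcosrel : Real.cos ((1 - α) * π) = - Real.cos (α * π) := by
    rw [show (1 - α) * π = π - α * π by ring, Real.cos_pi_sub]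
  set c := Real.cos (α * π) with hc
  set s := Real.sin (α * π) with hs
  set r := rRad q k with hr
  set ck := cCtr q k with hck
  have hr0 : 0 ≤ r := by
    rw [hr]; match k with
    | 0 => norm_num [rRad]
    | k + 1 =>
      simp only [rRad]
      have : (0:ℝ) ≤ (q - 1) * q ^ k := mul_nonneg (by linarith) (by positivity)
      linarith
  have hsc : s ^ 2 + c ^ 2 = 1 := Real.sin_sq_add_cos_sq _
  have hscC : (s:ℂ) ^ 2 + (c:ℂ) ^ 2 = 1 := by exact_mod_cast hsc
  set w : ℂ := (r:ℂ) * z + (ck:ℂ) with hw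
  have hfac : (w + c + Complex.I * s) * (w + c - Complex.I * s) = 0 := by
    have hkey2 : (w + c) ^ 2 + (s:ℂ) ^ 2 = 0 := by linear_combination h + hscC
    linear_combination hkey2 - (s:ℂ) ^ 2 * Complex.I_sq
  have habs : ‖(r:ℂ) * z‖ ≤ r * l := by
    rw [norm_mul, Complex.norm_real, Real.norm_of_nonneg hr0]
    exact mul_le_mul_of_nonneg_left hz hr0
  have habs2 : ‖(r:ℂ) * z‖ ^ 2 ≤ (r * l) ^ 2 := by
    apply pow_le_pow_left₀ (norm_nonneg _) habs
  rcases mul_eq_zero.mp hfac with hcase | hcase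
  · have heq : (r:ℂ) * z = ((-(c + ck) : ℝ) : ℂ) + ((-s : ℝ) : ℂ) * Complex.I := by
      push_cast
      linear_combination hcase
    have : ‖(r:ℂ) * z‖ ^ 2 = (-(c + ck)) ^ 2 + (-s) ^ 2 := by
      rw [heq, Complex.sq_norm, Complex.normSq_add_mul_I]
    rw [hcosrel] at hkey
    nlinarith
  · have heq : (r:ℂ) * z = ((-(c + ck) : ℝ) : ℂ) + ((s : ℝ) : ℂ) * Complex.I := by
      push_cast
      linear_combination hcase
    have : ‖(r:ℂ) * z‖ ^ 2 = (-(c + ck)) ^ 2 + s ^ 2 := by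
      rw [heq, Complex.sq_norm, Complex.normSq_add_mul_I]
    rw [hcosrel] at hkey
    nlinarith
end

section
/- Let q > 1 and let l be a real number with 1 < l < 1 + 2/q. Then there exist constants C > 0 and ε₀ ∈ (0,1) such that for every ε ∈ (0, ε₀), setting K = ⌈|ln ε| / ln q⌉ and J = ⌈ln(ε^{−1} |ln ε|) / (2 ln q · ln l)⌉, one has (K + 1)(l + √(l² − 1))^{−2J} + 1/(q^K − 1) ≤ C ε. -/
set_option maxHeartbeats 1000000

lemma log_quad_lb {v : ℝ} (hv : 0 ≤ v) : v - v ^ 2 / 2 ≤ Real.log (1 + v) := by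
  set f : ℝ → ℝ := fun x => Real.log (1 + x) - x + x ^ 2 / 2 with hf
  have hder : ∀ x : ℝ, 0 ≤ x → HasDerivAt f (1 / (1 + x) - 1 + x) x := by
    intro x hx
    have hx1 : (0:ℝ) < 1 + x := by linarith
    have h1 : HasDerivAt (fun y : ℝ => 1 + y) 1 x := by
      simpa using (hasDerivAt_id x).const_add (1 : ℝ)
    have h2 : HasDerivAt (fun y : ℝ => Real.log (1 + y)) (1 / (1 + x)) x := by
      have := (Real.hasDerivAt_log (ne_of_gt hx1)).comp x h1
      simpa [one_div, Function.comp_def] using this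
    have h3 : HasDerivAt (fun y : ℝ => y ^ 2 / 2) x x := by
      have := (hasDerivAt_pow 2 x).div_const 2
      simpa using this
    have := (h2.sub (hasDerivAt_id x)).add h3
    exact this
  have hmono : MonotoneOn f (Set.Ici (0:ℝ)) := by
    apply monotoneOn_of_deriv_nonneg (convex_Ici 0)
    · exact fun x hx => ((hder x hx).continuousAt).continuousWithinAt
    · intro x hx
      rw [interior_Ici] at hx
      exact ((hder x (le_of_lt hx)).differentiableAt).differentiableWithinAt
    · intro x hx
      rw [interior_Ici] at hx
      have hx0 : 0 < x := hx
      rw [(hder x (le_of_lt hx0)).deriv]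
      have h : (1:ℝ) - x ≤ 1 / (1 + x) := by
        rw [le_div_iff₀ (by linarith : (0:ℝ) < 1 + x)]
        nlinarith
      linarith
  have h0 : f 0 ≤ f v := hmono (Set.mem_Ici.mpr (le_refl (0:ℝ))) hv hv
  simp only [hf] at h0
  norm_num at h0
  linarith

lemma key_ineq_s16 (q l : ℝ) (hq : 1 < q) (hl1 : 1 < l) (hl2 : l < 1 + 2 / q) :
    Real.log q * Real.log l ≤ Real.log (l + Real.sqrt (l ^ 2 - 1)) := by
  have hq0 : 0 < q := lt_trans one_pos hq
  have hu0 : 0 < l - 1 := by linarith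
  have huq : l - 1 < 2 / q := by linarith
  set v := Real.sqrt ((l - 1) / 2) with hv
  have hv0 : 0 < v := Real.sqrt_pos.mpr (by linarith)
  have hv2 : v ^ 2 = (l - 1) / 2 := Real.sq_sqrt (by linarith)
  have hv1 : v < 1 := by
    have h2q : 2 / q < 2 := by
      rw [div_lt_iff₀ hq0]; linarith
    nlinarith
  -- log q ≤ 2 * log (1/v)
  have hqv : q < (1 / v) ^ 2 := by
    have h1 : (l - 1) * q < 2 := (lt_div_iff₀ hq0).mp huq
    have h2 : q * v ^ 2 < 1 := by nlinarith
    rw [div_pow, one_pow, lt_div_iff₀ (by positivity)]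
    linarith
  have hlogq : Real.log q ≤ 2 * Real.log (1 / v) := by
    have := Real.log_le_log hq0 (le_of_lt hqv)
    rwa [Real.log_pow, Nat.cast_ofNat] at this
  -- log (1/v) ≤ 1/(2v) - 1/4
  have hlogv : Real.log (1 / v) ≤ 1 / (2 * v) - 1 / 4 := by
    have h1 : (1 : ℝ) / v = 2 * (1 / (2 * v)) := by field_simp
    have h2 : Real.log (1 / v) = Real.log 2 + Real.log (1 / (2 * v)) := by
      rw [h1, Real.log_mul (by norm_num) (by positivity)]
    have h3 : Real.log (1 / (2 * v)) ≤ 1 / (2 * v) - 1 := Real.log_le_sub_one_of_pos (by positivity)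
    have h4 : Real.log 2 ≤ 3 / 4 := by
      have := Real.log_two_lt_d9; linarith
    linarith
  -- log l ≤ l - 1 = 2 v^2
  have hlogl : Real.log l ≤ 2 * v ^ 2 := by
    have := Real.log_le_sub_one_of_pos (by linarith : (0:ℝ) < l)
    linarith [hv2]
  have hlogl0 : 0 < Real.log l := Real.log_pos hl1
  have hlogv0 : 0 ≤ Real.log (1 / v) := Real.log_nonneg (by rw [le_div_iff₀ hv0]; linarith)
  -- LHS ≤ 2v - v^2
  have hLHS : Real.log q * Real.log l ≤ 2 * v - v ^ 2 := by
    have s1 : Real.log q * Real.log l ≤ (2 * Real.log (1 / v)) * (2 * v ^ 2) := by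
      have a1 : Real.log q * Real.log l ≤ (2 * Real.log (1 / v)) * Real.log l :=
        mul_le_mul_of_nonneg_right hlogq (le_of_lt hlogl0)
      have a2 : (2 * Real.log (1 / v)) * Real.log l ≤ (2 * Real.log (1 / v)) * (2 * v ^ 2) :=
        mul_le_mul_of_nonneg_left hlogl (by linarith)
      linarith
    have s2 : (2 * Real.log (1 / v)) * (2 * v ^ 2) ≤ 4 * v ^ 2 * (1 / (2 * v) - 1 / 4) := by
      nlinarith [sq_nonneg v]
    have s3 : 4 * v ^ 2 * (1 / (2 * v) - 1 / 4) = 2 * v - v ^ 2 := by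
      field_simp; ring
    linarith
  -- RHS ≥ 2v - v^2
  have hsq : 2 * v ≤ Real.sqrt (l ^ 2 - 1) := by
    have h1 : (2 * v) ^ 2 ≤ l ^ 2 - 1 := by nlinarith
    have := Real.sqrt_le_sqrt h1
    rwa [Real.sqrt_sq (by positivity)] at this
  have hrho : (1 + v) ^ 2 ≤ l + Real.sqrt (l ^ 2 - 1) := by nlinarith
  have hRHS : 2 * v - v ^ 2 ≤ Real.log (l + Real.sqrt (l ^ 2 - 1)) := by
    have h1 : Real.log ((1 + v) ^ 2) ≤ Real.log (l + Real.sqrt (l ^ 2 - 1)) :=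
      Real.log_le_log (by positivity) hrho
    have h2 : Real.log ((1 + v) ^ 2) = 2 * Real.log (1 + v) := by
      rw [Real.log_pow]; norm_num
    have h3 := log_quad_lb (le_of_lt hv0)
    nlinarith [h3]
  linarith

theorem soe_parameter_choice (q l : ℝ) (hq : 1 < q) (hl1 : 1 < l) (hl2 : l < 1 + 2 / q) :
    ∃ C : ℝ, 0 < C ∧ ∃ ε₀ : ℝ, ε₀ ∈ Set.Ioo (0 : ℝ) 1 ∧
      ∀ ε : ℝ, ε ∈ Set.Ioo (0 : ℝ) ε₀ →
        ((⌈|Real.log ε| / Real.log q⌉ : ℝ) + 1) *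
            (l + Real.sqrt (l ^ 2 - 1)) ^
              (-(2 * ⌈Real.log (ε⁻¹ * |Real.log ε|) / (2 * Real.log q * Real.log l)⌉)) +
          1 / (q ^ (⌈|Real.log ε| / Real.log q⌉ : ℤ) - 1) ≤ C * ε := by
  have hq0 : 0 < q := lt_trans one_pos hq
  have hA : 0 < Real.log q := Real.log_pos hq
  have hB : 0 < Real.log l := Real.log_pos hl1
  set A := Real.log q with hAdef
  set B := Real.log l with hBdef
  set ρ := l + Real.sqrt (l ^ 2 - 1) with hρdef
  have hρ1 : 1 < ρ := by
    have := Real.sqrt_nonneg (l ^ 2 - 1)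
    simp only [hρdef]; linarith
  have hρ0 : 0 < ρ := by linarith
  have hkey : A * B ≤ Real.log ρ := key_ineq_s16 q l hq hl1 hl2
  refine ⟨1 / A + 4, by positivity, Real.exp (-1), ⟨Real.exp_pos _, by
    have := Real.exp_lt_one_iff.mpr (by norm_num : (-1:ℝ) < 0); exact this⟩, ?_⟩
  intro ε ⟨hε0, hε1⟩
  have hlogε : Real.log ε < -1 := by
    have := Real.log_lt_log hε0 hε1
    rwa [Real.log_exp] at this
  set L := |Real.log ε| with hLdef
  have hL : 1 ≤ L := by
    rw [hLdef, abs_of_neg (by linarith)]; linarith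
  have hL0 : 0 < L := by linarith
  have hLeq : L = -Real.log ε := by rw [hLdef, abs_of_neg (by linarith)]
  have hexpL : Real.exp L = ε⁻¹ := by
    rw [hLeq, Real.exp_neg, Real.exp_log hε0]
  have hεinv : 1 < ε⁻¹ := by
    rw [← hexpL]
    calc (1:ℝ) = Real.exp 0 := (Real.exp_zero).symm
    _ < Real.exp L := Real.exp_lt_exp.mpr (by linarith)
  -- K facts
  set K := ⌈L / A⌉ with hKdef
  have hKge : L / A ≤ (K : ℝ) := Int.le_ceil _
  have hKlt : (K : ℝ) < L / A + 1 := Int.ceil_lt_add_one _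
  have hXpos : 0 < L / A := by positivity
  have hKpos : (0:ℝ) < K := lt_of_lt_of_le hXpos hKge
  -- second term: q^K ≥ ε⁻¹
  have hqK : ε⁻¹ ≤ q ^ (K : ℤ) := by
    rw [← Real.rpow_intCast q K]
    have h1 : q ^ ((K : ℤ) : ℝ) = Real.exp (A * ((K : ℤ) : ℝ)) := by
      rw [Real.rpow_def_of_pos hq0]
    rw [h1, ← hexpL]
    apply Real.exp_le_exp.mpr
    have : L = A * (L / A) := by field_simp
    push_cast
    nlinarith [hKge, hA]
  have hterm2 : 1 / (q ^ (K : ℤ) - 1) ≤ 2 * ε := by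
    have he2 : (2:ℝ) ≤ ε⁻¹ := by
      rw [← hexpL]
      have : (2:ℝ) ≤ Real.exp 1 := by
        have := Real.add_one_le_exp (1:ℝ); linarith
      calc (2:ℝ) ≤ Real.exp 1 := this
      _ ≤ Real.exp L := Real.exp_le_exp.mpr hL
    have hpos : 0 < ε⁻¹ / 2 := by positivity
    have hge : ε⁻¹ / 2 ≤ q ^ (K : ℤ) - 1 := by linarith
    have h5 := one_div_le_one_div_of_le hpos hge
    have heq : 1 / (ε⁻¹ / 2) = 2 * ε := by
      rw [one_div, inv_div]
      field_simp
    rw [heq] at h5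
    linarith
  have hqK1 : (0:ℝ) < q ^ (K : ℤ) - 1 := by
    have : (2:ℝ) ≤ ε⁻¹ := by
      rw [← hexpL]
      have h2 : (2:ℝ) ≤ Real.exp 1 := by have := Real.add_one_le_exp (1:ℝ); linarith
      calc (2:ℝ) ≤ Real.exp 1 := h2
      _ ≤ Real.exp L := Real.exp_le_exp.mpr hL
    linarith
  -- J facts
  set Y := Real.log (ε⁻¹ * L) with hYdef
  have hYge : L ≤ Y := by
    rw [hYdef, ← hexpL]
    calc L = Real.log (Real.exp L) := (Real.log_exp L).symm
    _ ≤ Real.log (Real.exp L * L) := by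
        apply Real.log_le_log (Real.exp_pos _)
        nlinarith [Real.exp_pos L, hL]
  have hY0 : 0 < Y := by linarith
  set J := ⌈Y / (2 * A * B)⌉ with hJdef
  have hJge : Y / (2 * A * B) ≤ (J : ℝ) := Int.le_ceil _
  have hJ0 : (0:ℝ) < J := lt_of_lt_of_le (by positivity) hJge
  -- first-term power bound
  have hpow : ρ ^ (-(2 * J)) ≤ ε / L := by
    have hYle : Y ≤ Real.log ρ * ((2 * J : ℤ) : ℝ) := by
      have h1 : Y ≤ 2 * A * B * (J : ℝ) := by
        have := mul_le_mul_of_nonneg_left hJge (le_of_lt (by positivity : (0:ℝ) < 2 * A * B))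
        calc Y = 2 * A * B * (Y / (2 * A * B)) := by field_simp
        _ ≤ 2 * A * B * (J : ℝ) := this
      push_cast
      nlinarith [hJ0, hkey, mul_pos hA hB]
    have h2 : ε⁻¹ * L ≤ ρ ^ ((2 * J : ℤ)) := by
      rw [← Real.rpow_intCast ρ (2 * J), Real.rpow_def_of_pos hρ0]
      calc ε⁻¹ * L = Real.exp Y := by
            rw [hYdef, Real.exp_log (by positivity)]
      _ ≤ Real.exp (Real.log ρ * ((2 * J : ℤ) : ℝ)) := Real.exp_le_exp.mpr hYle
    have hεL : 0 < ε⁻¹ * L := by positivity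
    have h3 : (ρ ^ ((2 * J : ℤ)))⁻¹ ≤ (ε⁻¹ * L)⁻¹ := inv_anti₀ hεL h2
    have h4 : (ε⁻¹ * L)⁻¹ = ε / L := by
      rw [mul_inv, inv_inv, div_eq_mul_inv]
    rw [h4] at h3
    rw [zpow_neg]
    exact h3
  have hpow0 : 0 ≤ ρ ^ (-(2 * J)) := by positivity
  -- first term total
  have hterm1 : ((K : ℝ) + 1) * ρ ^ (-(2 * J)) ≤ (1 / A + 2) * ε := by
    have hK1 : (K : ℝ) + 1 ≤ L * (1 / A + 2) := by
      have : (K : ℝ) + 1 ≤ L / A + 2 := by linarith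
      have h2 : L / A + 2 ≤ L * (1 / A + 2) := by
        have : L / A = L * (1 / A) := by ring
        nlinarith [hL, hA]
      linarith
    have h6 := mul_le_mul hK1 hpow hpow0 (by positivity)
    have heq : L * (1 / A + 2) * (ε / L) = (1 / A + 2) * ε := by
      field_simp
    rw [heq] at h6
    exact h6
  have hfinal : ((K : ℝ) + 1) * ρ ^ (-(2 * J)) + 1 / (q ^ (K : ℤ) - 1) ≤ (1 / A + 4) * ε := by
    linarith
  exact hfinal
end
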